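/- arXiv:2002.06476 — 2 statements merged into one kernel-verified Lean document; each statement's English description precedes it below -/
import Mathlib

section
/- (Corollary to Theorem 1, as used in Lemma 1 of the paper.) Under the hypotheses of Theorem 1 (finite zero-sum game L : Φ × Ω → ℝ with fully mixed Nash equilibrium (p*, q*), and differentiable positive curves p(t), q(t) of mixed strategies obeying the replicator dynamics), the total Kullback–Leibler divergence D(t) = Σ_φ p*(φ)·ln(p*(φ)/p(t,φ)) + Σ_ω q*(ω)·ln(q*(ω)/q(t,ω)) is constant in t: D(t) = D(0) for all t ∈ ℝ. -/
/-!
Along the replicator dynamics, `d/dt ln p(t, φ)` is the excess payoff of `φ`, so the total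
KL divergence from `(p*, q*)` has derivative `E(p(t), q*) - E(p*, q(t))`. At a fully mixed
equilibrium every pure strategy is in the support, hence a best reply, so every strategy earns
the value `E(p*, q*)` against the opponent's equilibrium strategy, and the derivative vanishes.
-/

open Finset

def IsMixed {Φ : Type*} [Fintype Φ] (p : Φ → ℝ) : Prop :=
  (∀ φ, 0 ≤ p φ) ∧ ∑ φ, p φ = 1

/-- Expected payoff of the zero-sum game with payoff `L` under mixed strategies `p, q`. -/
def expPay {Φ Ω : Type*} [Fintype Φ] [Fintype Ω] (L : Φ → Ω → ℝ)
    (p : Φ → ℝ) (q : Ω → ℝ) : ℝ :=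
  ∑ φ, ∑ ω, p φ * q ω * L φ ω

theorem eq_of_forall_le_of_sum_mul_eq {ι : Type*} [Fintype ι] {w a : ι → ℝ} {c : ℝ}
    (hw : ∀ i, 0 < w i) (hsum : ∑ i, w i = 1) (ha : ∀ i, a i ≤ c)
    (havg : ∑ i, w i * a i = c) (i : ι) : a i = c := by
  refine (ha i).eq_or_lt.resolve_right fun hlt => havg.not_lt ?_
  calc ∑ j, w j * a j < ∑ j, w j * c :=
        Finset.sum_lt_sum (fun j _ => mul_le_mul_of_nonneg_left (ha j) (hw j).le)
          ⟨i, Finset.mem_univ i, mul_lt_mul_of_pos_left hlt (hw i)⟩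
    _ = c := by rw [← Finset.sum_mul, hsum, one_mul]

section Game

variable {Φ Ω : Type*} [Fintype Φ] [Fintype Ω] (L : Φ → Ω → ℝ)

theorem expPay_eq_sum_mul_left (p : Φ → ℝ) (q : Ω → ℝ) :
    expPay L p q = ∑ φ, p φ * ∑ ω, q ω * L φ ω := by
  simp only [expPay, Finset.mul_sum, mul_assoc]

theorem expPay_eq_sum_mul_right (p : Φ → ℝ) (q : Ω → ℝ) :
    expPay L p q = ∑ ω, q ω * ∑ φ, p φ * L φ ω := by
  rw [expPay, Finset.sum_comm]
  simp only [Finset.mul_sum]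
  exact Finset.sum_congr rfl fun _ _ => Finset.sum_congr rfl fun _ _ => by ring

theorem expPay_neg_swap (p : Φ → ℝ) (q : Ω → ℝ) :
    expPay (fun ω φ => -L φ ω) q p = -expPay L p q := by
  rw [expPay_eq_sum_mul_left, expPay_eq_sum_mul_right, ← Finset.sum_neg_distrib]
  simp only [mul_neg, Finset.sum_neg_distrib]

theorem isMixed_single [DecidableEq Φ] (φ : Φ) : IsMixed (Pi.single φ 1 : Φ → ℝ) :=
  ⟨fun ψ => by by_cases h : ψ = φ <;> simp [h], by simp⟩

theorem expPay_single_left [DecidableEq Φ] (φ : Φ) (q : Ω → ℝ) :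
    expPay L (Pi.single φ 1) q = ∑ ω, q ω * L φ ω := by
  rw [expPay_eq_sum_mul_left, Fintype.sum_eq_single φ fun ψ h => by simp [h]]
  simp

variable {L} {pstar : Φ → ℝ} {qstar : Ω → ℝ}

theorem expPay_eq_of_best_response_left (hpos : ∀ φ, 0 < pstar φ) (hsum : ∑ φ, pstar φ = 1)
    (hNE : ∀ p : Φ → ℝ, IsMixed p → expPay L p qstar ≤ expPay L pstar qstar)
    {p : Φ → ℝ} (hp : ∑ φ, p φ = 1) : expPay L p qstar = expPay L pstar qstar := by
  classical
  have hpure : ∀ φ, ∑ ω, qstar ω * L φ ω = expPay L pstar qstar :=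
    eq_of_forall_le_of_sum_mul_eq hpos hsum
      (fun φ => expPay_single_left L φ qstar ▸ hNE _ (isMixed_single φ))
      (expPay_eq_sum_mul_left L pstar qstar).symm
  rw [expPay_eq_sum_mul_left]
  simp only [hpure, ← Finset.sum_mul, hp, one_mul]

theorem expPay_eq_of_best_response_right (hpos : ∀ ω, 0 < qstar ω) (hsum : ∑ ω, qstar ω = 1)
    (hNE : ∀ q : Ω → ℝ, IsMixed q → expPay L pstar qstar ≤ expPay L pstar q)
    {q : Ω → ℝ} (hq : ∑ ω, q ω = 1) : expPay L pstar q = expPay L pstar qstar := by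
  -- the column player's problem is the row player's for the payoff `-Lᵀ`
  have hNE' : ∀ q : Ω → ℝ, IsMixed q →
      expPay (fun ω φ => -L φ ω) q pstar ≤ expPay (fun ω φ => -L φ ω) qstar pstar := by
    intro q hq
    simpa only [expPay_neg_swap, neg_le_neg_iff] using hNE q hq
  simpa only [expPay_neg_swap, neg_inj] using expPay_eq_of_best_response_left hpos hsum hNE' hq

end Game

noncomputable def klDivergence {ι : Type*} [Fintype ι] (w x : ι → ℝ) : ℝ :=
  ∑ i, w i * Real.log (w i / x i)

theorem hasDerivAt_klDivergence {ι : Type*} [Fintype ι] (w : ι → ℝ) {x : ℝ → ι → ℝ}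
    {g : ι → ℝ} {t : ℝ} (hx : ∀ s i, x s i ≠ 0)
    (hdx : ∀ i, HasDerivAt (fun s => x s i) (x t i * g i) t) :
    HasDerivAt (fun s => klDivergence w (x s)) (-∑ i, w i * g i) t := by
  simp only [klDivergence, ← Finset.sum_neg_distrib, ← mul_neg]
  refine HasDerivAt.fun_sum fun i _ => ?_
  by_cases hw : w i = 0
  · simpa [hw] using hasDerivAt_const t (0 : ℝ)
  have hlog : HasDerivAt (fun s => Real.log (x s i)) (g i) t := by
    simpa only [mul_div_cancel_left₀ _ (hx t i)] using (hdx i).log (hx t i)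
  have hsplit : (fun s => w i * Real.log (w i / x s i)) =
      fun s => w i * (Real.log (w i) - Real.log (x s i)) :=
    funext fun s => by rw [Real.log_div hw (hx s i)]
  rw [hsplit]
  exact (hlog.const_sub _).const_mul (w i)

theorem hasDerivAt_klDivergence_replicator {Φ Ω : Type*} [Fintype Φ] [Fintype Ω]
    (L : Φ → Ω → ℝ) {pstar : Φ → ℝ} {qstar : Ω → ℝ}
    (hpstar : ∑ φ, pstar φ = 1) (hqstar : ∑ ω, qstar ω = 1)
    {p : ℝ → Φ → ℝ} {q : ℝ → Ω → ℝ} (hp : ∀ s φ, p s φ ≠ 0) (hq : ∀ s ω, q s ω ≠ 0) {t : ℝ}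
    (hpdyn : ∀ φ, HasDerivAt (fun s => p s φ)
      (p t φ * ((∑ ω, q t ω * L φ ω) - ∑ φ', p t φ' * ∑ ω, q t ω * L φ' ω)) t)
    (hqdyn : ∀ ω, HasDerivAt (fun s => q s ω)
      (q t ω * ((-∑ φ, p t φ * L φ ω) - ∑ ω', q t ω' * (-∑ φ, p t φ * L φ ω'))) t) :
    HasDerivAt (fun s => klDivergence pstar (p s) + klDivergence qstar (q s))
      (expPay L (p t) qstar - expPay L pstar (q t)) t := by
  refine ((hasDerivAt_klDivergence pstar hp hpdyn).add
    (hasDerivAt_klDivergence qstar hq hqdyn)).congr_deriv ?_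
  simp only [mul_sub, mul_neg, Finset.sum_sub_distrib, Finset.sum_neg_distrib, ← Finset.sum_mul,
    hpstar, hqstar, one_mul, ← expPay_eq_sum_mul_left L _ (q t),
    ← expPay_eq_sum_mul_right L (p t) _]
  ring

theorem kl_divergence_constant_replicator_general
    {Φ Ω : Type*} [Fintype Φ] [Fintype Ω]
    (L : Φ → Ω → ℝ) (pstar : Φ → ℝ) (qstar : Ω → ℝ)
    (hpmix : IsMixed pstar) (hqmix : IsMixed qstar)
    (hpfull : ∀ φ, 0 < pstar φ) (hqfull : ∀ ω, 0 < qstar ω)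
    (hNE₁ : ∀ p : Φ → ℝ, IsMixed p → expPay L p qstar ≤ expPay L pstar qstar)
    (hNE₂ : ∀ q : Ω → ℝ, IsMixed q → expPay L pstar qstar ≤ expPay L pstar q)
    (p : ℝ → Φ → ℝ) (q : ℝ → Ω → ℝ)
    (hppos : ∀ t φ, 0 < p t φ) (hqpos : ∀ t ω, 0 < q t ω)
    (hpsum : ∀ t, ∑ φ, p t φ = 1) (hqsum : ∀ t, ∑ ω, q t ω = 1)
    (hpdyn : ∀ t φ, HasDerivAt (fun s => p s φ)
      (p t φ * ((∑ ω, q t ω * L φ ω) - ∑ φ', p t φ' * ∑ ω, q t ω * L φ' ω)) t)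
    (hqdyn : ∀ t ω, HasDerivAt (fun s => q s ω)
      (q t ω * ((-∑ φ, p t φ * L φ ω) - ∑ ω', q t ω' * (-∑ φ, p t φ * L φ ω'))) t) :
    ∀ t : ℝ,
      (∑ φ, pstar φ * Real.log (pstar φ / p t φ)) +
        ∑ ω, qstar ω * Real.log (qstar ω / q t ω) =
      (∑ φ, pstar φ * Real.log (pstar φ / p 0 φ)) +
        ∑ ω, qstar ω * Real.log (qstar ω / q 0 ω) := by
  have hD : ∀ t,
      HasDerivAt (fun s => klDivergence pstar (p s) + klDivergence qstar (q s)) 0 t := by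
    intro t
    have hderiv := hasDerivAt_klDivergence_replicator L hpmix.2 hqmix.2
      (fun s φ => (hppos s φ).ne') (fun s ω => (hqpos s ω).ne') (hpdyn t) (hqdyn t)
    rwa [expPay_eq_of_best_response_left hpfull hpmix.2 hNE₁ (hpsum t),
      expPay_eq_of_best_response_right hqfull hqmix.2 hNE₂ (hqsum t), sub_self] at hderiv
  exact fun t => is_const_of_deriv_eq_zero (fun s => (hD s).differentiableAt)
    (fun s => (hD s).deriv) t 0

/-- Corollary to Theorem 1 (as used in Lemma 1): along positive replicator-dynamics
solutions of a finite zero-sum game with fully mixed Nash equilibrium `(p*, q*)`, the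
total KL divergence
`D(t) = ∑ φ, p* φ * ln (p* φ / p t φ) + ∑ ω, q* ω * ln (q* ω / q t ω)`
is constant: `D(t) = D(0)` for all `t`. -/
theorem kl_divergence_constant_replicator
    {Φ Ω : Type*} [Fintype Φ] [Fintype Ω] [Nonempty Φ] [Nonempty Ω]
    (L : Φ → Ω → ℝ) (pstar : Φ → ℝ) (qstar : Ω → ℝ)
    (hpmix : IsMixed pstar) (hqmix : IsMixed qstar)
    (hpfull : ∀ φ, 0 < pstar φ) (hqfull : ∀ ω, 0 < qstar ω)
    (hNE₁ : ∀ p : Φ → ℝ, IsMixed p → expPay L p qstar ≤ expPay L pstar qstar)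
    (hNE₂ : ∀ q : Ω → ℝ, IsMixed q → expPay L pstar qstar ≤ expPay L pstar q)
    (p : ℝ → Φ → ℝ) (q : ℝ → Ω → ℝ)
    (hppos : ∀ t φ, 0 < p t φ) (hqpos : ∀ t ω, 0 < q t ω)
    (hpsum : ∀ t, ∑ φ, p t φ = 1) (hqsum : ∀ t, ∑ ω, q t ω = 1)
    (hpdyn : ∀ t φ, HasDerivAt (fun s => p s φ)
      (p t φ * ((∑ ω, q t ω * L φ ω) - ∑ φ', p t φ' * ∑ ω, q t ω * L φ' ω)) t)
    (hqdyn : ∀ t ω, HasDerivAt (fun s => q s ω)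
      (q t ω * ((-∑ φ, p t φ * L φ ω) - ∑ ω', q t ω' * (-∑ φ, p t φ * L φ ω'))) t) :
    ∀ t : ℝ,
      (∑ φ, pstar φ * Real.log (pstar φ / p t φ)) +
        ∑ ω, qstar ω * Real.log (qstar ω / q t ω) =
      (∑ φ, pstar φ * Real.log (pstar φ / p 0 φ)) +
        ∑ ω, qstar ω * Real.log (qstar ω / q 0 ω) :=
  kl_divergence_constant_replicator_general L pstar qstar hpmix hqmix hpfull hqfull hNE₁ hNE₂ p q
    hppos hqpos hpsum hqsum hpdyn hqdyn
end

section
/- (Non-convergence / recurrence consequence of Theorem 1.) Under the hypotheses of Theorem 1 (finite zero-sum game with fully mixed Nash equilibrium (p*, q*) and differentiable positive curves p(t), q(t) of mixed strategies obeying the replicator dynamics), if the initial divergence Σ_φ p*(φ)·ln(p*(φ)/p(0,φ)) + Σ_ω q*(ω)·ln(q*(ω)/q(0,ω)) is strictly positive, then (p(t), q(t)) does not converge to (p*, q*) as t → ∞: there is no pointwise convergence p(t,φ) → p*(φ) and q(t,ω) → q*(ω) for all φ, ω. -/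
/-!
Along the replicator dynamics the divergence `KL(p* ‖ p(t)) + KL(q* ‖ q(t))` from a fully mixed
equilibrium is a constant of motion: its derivative is
`(E(p,q) - E(p*,q)) + (E(p,q*) - E(p,q)) = E(p,q*) - E(p*,q)`, and full support of the equilibrium
makes every pure strategy a best response, so both `E(p,q*)` and `E(p*,q)` equal the value of
the game. Convergence to `(p*, q*)` would drive the divergence to `0`, contradicting a positive
initial value.
-/

open Finset Filter

open Topology Real

noncomputable def relEntropy {ι : Type*} [Fintype ι] (w p : ι → ℝ) : ℝ :=
  ∑ i, w i * log (w i / p i)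

lemma mul_log_div_eq {a x : ℝ} (hx : x ≠ 0) : a * log (a / x) = a * log a - a * log x := by
  rcases eq_or_ne a 0 with rfl | ha
  · simp
  · rw [log_div ha hx]
    ring

lemma sum_mul_sub_of_sum_eq_one {ι : Type*} [Fintype ι] {w : ι → ℝ} (hw : ∑ i, w i = 1)
    (f : ι → ℝ) (c : ℝ) : ∑ i, w i * (f i - c) = ∑ i, w i * f i - c := by
  simp only [mul_sub, sum_sub_distrib, ← sum_mul, hw, one_mul]

lemma eq_sum_mul_of_le_sum_mul {ι : Type*} [Fintype ι] {w c : ι → ℝ} (hw : ∑ i, w i = 1)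
    (hpos : ∀ i, 0 < w i) (hle : ∀ i, c i ≤ ∑ j, w j * c j) (i : ι) :
    c i = ∑ j, w j * c j := by
  have hgap : ∑ j, w j * (∑ k, w k * c k - c j) = 0 := by
    simp only [mul_sub, sum_sub_distrib, ← sum_mul, hw, one_mul, sub_self]
  have hterm := (sum_eq_zero_iff_of_nonneg fun j _ =>
    mul_nonneg (hpos j).le (sub_nonneg.mpr (hle j))).mp hgap i (mem_univ i)
  have := (mul_eq_zero.mp hterm).resolve_left (hpos i).ne'
  linarith

lemma hasDerivAt_relEntropy_of_replicator {ι : Type*} [Fintype ι] {w : ι → ℝ}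
    (hw : ∑ i, w i = 1) {p : ℝ → ι → ℝ} (hpos : ∀ s i, 0 < p s i) {u : ι → ℝ} {t : ℝ}
    (hdyn : ∀ i, HasDerivAt (fun s => p s i) (p t i * (u i - ∑ j, p t j * u j)) t) :
    HasDerivAt (fun s => relEntropy w (p s)) (∑ i, p t i * u i - ∑ i, w i * u i) t := by
  have hlog : ∀ i, HasDerivAt (fun s => log (p s i)) (u i - ∑ j, p t j * u j) t := fun i => by
    simpa [mul_div_cancel_left₀ _ (hpos t i).ne'] using (hdyn i).log (hpos t i).ne'
  have hsum : HasDerivAt (fun s => ∑ i, w i * log (p s i))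
      (∑ i, w i * (u i - ∑ j, p t j * u j)) t :=
    HasDerivAt.fun_sum fun i _ => (hlog i).const_mul (w i)
  have hsplit : (fun s => relEntropy w (p s))
      = fun s => ∑ i, w i * log (w i) - ∑ i, w i * log (p s i) := by
    funext s
    simp only [relEntropy, mul_log_div_eq (hpos s _).ne', sum_sub_distrib]
  rw [hsplit]
  exact (hsum.const_sub _).congr_deriv (by rw [sum_mul_sub_of_sum_eq_one hw]; ring)

lemma tendsto_relEntropy_zero {α ι : Type*} [Fintype ι] {l : Filter α} {w : ι → ℝ}
    {p : α → ι → ℝ} (hp : ∀ i, Tendsto (fun a => p a i) l (𝓝 (w i))) :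
    Tendsto (fun a => relEntropy w (p a)) l (𝓝 0) := by
  have hterm : ∀ i, Tendsto (fun a => w i * log (w i / p a i)) l (𝓝 0) := fun i => by
    rcases eq_or_ne (w i) 0 with h | h
    · simpa [h] using tendsto_const_nhds
    · simpa [h] using ((tendsto_const_nhds.div (hp i) h).log (div_ne_zero h h)).const_mul (w i)
  simpa [relEntropy] using tendsto_finsetSum univ fun i _ => hterm i

section FullyMixedEquilibrium

variable {Φ Ω : Type*} [Fintype Φ] [Fintype Ω]

lemma expPay_eq_sum_left (L : Φ → Ω → ℝ) (p : Φ → ℝ) (q : Ω → ℝ) :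
    expPay L p q = ∑ φ, p φ * ∑ ω, q ω * L φ ω := by
  simp only [expPay, mul_sum, mul_assoc]

lemma expPay_eq_sum_right (L : Φ → Ω → ℝ) (p : Φ → ℝ) (q : Ω → ℝ) :
    expPay L p q = ∑ ω, q ω * ∑ φ, p φ * L φ ω := by
  rw [expPay, sum_comm]
  simp only [mul_sum]
  exact sum_congr rfl fun _ _ => sum_congr rfl fun _ _ => by ring

lemma isMixed_pi_single [DecidableEq Φ] (φ : Φ) : IsMixed (Pi.single φ (1 : ℝ)) :=
  ⟨fun φ' => by by_cases h : φ' = φ <;> simp [h], by simp⟩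

variable {L : Φ → Ω → ℝ} {pstar : Φ → ℝ} {qstar : Ω → ℝ}

lemma row_payoff_eq_expPay_of_pos (hpsum : ∑ φ, pstar φ = 1)
    (hpfull : ∀ φ, 0 < pstar φ)
    (hNE₁ : ∀ p : Φ → ℝ, IsMixed p → expPay L p qstar ≤ expPay L pstar qstar) (φ : Φ) :
    ∑ ω, qstar ω * L φ ω = expPay L pstar qstar := by
  classical
  rw [expPay_eq_sum_left]
  refine eq_sum_mul_of_le_sum_mul (c := fun φ => ∑ ω, qstar ω * L φ ω) hpsum hpfull
    (fun φ' => ?_) φ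
  simpa [expPay_eq_sum_left, Pi.single_apply] using hNE₁ _ (isMixed_pi_single φ')

lemma column_payoff_eq_expPay_of_pos (hqsum : ∑ ω, qstar ω = 1)
    (hqfull : ∀ ω, 0 < qstar ω)
    (hNE₂ : ∀ q : Ω → ℝ, IsMixed q → expPay L pstar qstar ≤ expPay L pstar q) (ω : Ω) :
    ∑ φ, pstar φ * L φ ω = expPay L pstar qstar := by
  classical
  have hneg := eq_sum_mul_of_le_sum_mul (c := fun ω => -∑ φ, pstar φ * L φ ω) hqsum hqfull
    (fun ω' => ?_) ω
  · simpa [mul_neg, sum_neg_distrib, ← expPay_eq_sum_right] using hneg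
  · have hpure := hNE₂ _ (isMixed_pi_single ω')
    rw [expPay_eq_sum_right L pstar (Pi.single ω' 1)] at hpure
    simp only [mul_neg, sum_neg_distrib, ← expPay_eq_sum_right]
    simpa [Pi.single_apply] using hpure

theorem relEntropy_add_relEntropy_eq_of_replicator (hpstar_sum : ∑ φ, pstar φ = 1)
    (hqstar_sum : ∑ ω, qstar ω = 1) (hpfull : ∀ φ, 0 < pstar φ) (hqfull : ∀ ω, 0 < qstar ω)
    (hNE₁ : ∀ p : Φ → ℝ, IsMixed p → expPay L p qstar ≤ expPay L pstar qstar)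
    (hNE₂ : ∀ q : Ω → ℝ, IsMixed q → expPay L pstar qstar ≤ expPay L pstar q)
    {p : ℝ → Φ → ℝ} {q : ℝ → Ω → ℝ}
    (hppos : ∀ t φ, 0 < p t φ) (hqpos : ∀ t ω, 0 < q t ω)
    (hpsum : ∀ t, ∑ φ, p t φ = 1) (hqsum : ∀ t, ∑ ω, q t ω = 1)
    (hpdyn : ∀ t φ, HasDerivAt (fun s => p s φ)
      (p t φ * ((∑ ω, q t ω * L φ ω) - ∑ φ', p t φ' * ∑ ω, q t ω * L φ' ω)) t)
    (hqdyn : ∀ t ω, HasDerivAt (fun s => q s ω)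
      (q t ω * ((-∑ φ, p t φ * L φ ω) - ∑ ω', q t ω' * (-∑ φ, p t φ * L φ ω'))) t)
    (t : ℝ) :
    relEntropy pstar (p t) + relEntropy qstar (q t)
      = relEntropy pstar (p 0) + relEntropy qstar (q 0) := by
  have hrow := row_payoff_eq_expPay_of_pos hpstar_sum hpfull hNE₁
  have hcol := column_payoff_eq_expPay_of_pos hqstar_sum hqfull hNE₂
  have hderiv : ∀ τ,
      HasDerivAt (fun s => relEntropy pstar (p s) + relEntropy qstar (q s)) 0 τ := by
    intro τ
    refine ((hasDerivAt_relEntropy_of_replicator hpstar_sum hppos (hpdyn τ)).add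
      (hasDerivAt_relEntropy_of_replicator hqstar_sum hqpos (hqdyn τ))).congr_deriv ?_
    have hpstar_q : ∑ φ, pstar φ * ∑ ω, q τ ω * L φ ω = expPay L pstar qstar := by
      rw [← expPay_eq_sum_left, expPay_eq_sum_right]
      simp only [hcol, ← sum_mul, hqsum, one_mul]
    have hp_qstar : ∑ ω, qstar ω * ∑ φ, p τ φ * L φ ω = expPay L pstar qstar := by
      rw [← expPay_eq_sum_right, expPay_eq_sum_left]
      simp only [hrow, ← sum_mul, hpsum, one_mul]
    simp only [mul_neg, sum_neg_distrib, hpstar_q, hp_qstar]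
    rw [← expPay_eq_sum_left L (p τ) (q τ), ← expPay_eq_sum_right L (p τ) (q τ)]
    ring
  exact is_const_of_deriv_eq_zero (fun s => (hderiv s).differentiableAt)
    (fun s => (hderiv s).deriv) t 0

end FullyMixedEquilibrium

theorem replicator_not_convergent_to_nash_general
    {Φ Ω : Type*} [Fintype Φ] [Fintype Ω]
    (L : Φ → Ω → ℝ) (pstar : Φ → ℝ) (qstar : Ω → ℝ)
    (hpmix : IsMixed pstar) (hqmix : IsMixed qstar)
    (hpfull : ∀ φ, 0 < pstar φ) (hqfull : ∀ ω, 0 < qstar ω)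
    (hNE₁ : ∀ p : Φ → ℝ, IsMixed p → expPay L p qstar ≤ expPay L pstar qstar)
    (hNE₂ : ∀ q : Ω → ℝ, IsMixed q → expPay L pstar qstar ≤ expPay L pstar q)
    (p : ℝ → Φ → ℝ) (q : ℝ → Ω → ℝ)
    (hppos : ∀ t φ, 0 < p t φ) (hqpos : ∀ t ω, 0 < q t ω)
    (hpsum : ∀ t, ∑ φ, p t φ = 1) (hqsum : ∀ t, ∑ ω, q t ω = 1)
    (hpdyn : ∀ t φ, HasDerivAt (fun s => p s φ)
      (p t φ * ((∑ ω, q t ω * L φ ω) - ∑ φ', p t φ' * ∑ ω, q t ω * L φ' ω)) t)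
    (hqdyn : ∀ t ω, HasDerivAt (fun s => q s ω)
      (q t ω * ((-∑ φ, p t φ * L φ ω) - ∑ ω', q t ω' * (-∑ φ, p t φ * L φ ω'))) t)
    (hD0 : 0 < (∑ φ, pstar φ * Real.log (pstar φ / p 0 φ)) +
        ∑ ω, qstar ω * Real.log (qstar ω / q 0 ω)) :
    ¬ ((∀ φ, Tendsto (fun t => p t φ) atTop (nhds (pstar φ))) ∧
        ∀ ω, Tendsto (fun t => q t ω) atTop (nhds (qstar ω))) := by
  rintro ⟨hp, hq⟩
  have hconst := relEntropy_add_relEntropy_eq_of_replicator hpmix.2 hqmix.2 hpfull hqfull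
    hNE₁ hNE₂ hppos hqpos hpsum hqsum hpdyn hqdyn
  have hlim := (tendsto_relEntropy_zero hp).add (tendsto_relEntropy_zero hq)
  rw [add_zero, funext hconst] at hlim
  exact hD0.ne' (tendsto_nhds_unique tendsto_const_nhds hlim)

/-- Non-convergence consequence of Theorem 1: if a positive replicator-dynamics solution
of a finite zero-sum game starts at strictly positive KL divergence from a fully mixed
Nash equilibrium `(p*, q*)`, then it does not converge pointwise to `(p*, q*)` as
`t → ∞`. -/
theorem replicator_not_convergent_to_nash
    {Φ Ω : Type*} [Fintype Φ] [Fintype Ω] [Nonempty Φ] [Nonempty Ω]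
    (L : Φ → Ω → ℝ) (pstar : Φ → ℝ) (qstar : Ω → ℝ)
    (hpmix : IsMixed pstar) (hqmix : IsMixed qstar)
    (hpfull : ∀ φ, 0 < pstar φ) (hqfull : ∀ ω, 0 < qstar ω)
    (hNE₁ : ∀ p : Φ → ℝ, IsMixed p → expPay L p qstar ≤ expPay L pstar qstar)
    (hNE₂ : ∀ q : Ω → ℝ, IsMixed q → expPay L pstar qstar ≤ expPay L pstar q)
    (p : ℝ → Φ → ℝ) (q : ℝ → Ω → ℝ)
    (hppos : ∀ t φ, 0 < p t φ) (hqpos : ∀ t ω, 0 < q t ω)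
    (hpsum : ∀ t, ∑ φ, p t φ = 1) (hqsum : ∀ t, ∑ ω, q t ω = 1)
    (hpdyn : ∀ t φ, HasDerivAt (fun s => p s φ)
      (p t φ * ((∑ ω, q t ω * L φ ω) - ∑ φ', p t φ' * ∑ ω, q t ω * L φ' ω)) t)
    (hqdyn : ∀ t ω, HasDerivAt (fun s => q s ω)
      (q t ω * ((-∑ φ, p t φ * L φ ω) - ∑ ω', q t ω' * (-∑ φ, p t φ * L φ ω'))) t)
    (hD0 : 0 < (∑ φ, pstar φ * Real.log (pstar φ / p 0 φ)) +
        ∑ ω, qstar ω * Real.log (qstar ω / q 0 ω)) :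
    ¬ ((∀ φ, Tendsto (fun t => p t φ) atTop (nhds (pstar φ))) ∧
        ∀ ω, Tendsto (fun t => q t ω) atTop (nhds (qstar ω))) :=
  replicator_not_convergent_to_nash_general L pstar qstar hpmix hqmix hpfull hqfull hNE₁ hNE₂ p q
    hppos hqpos hpsum hqsum hpdyn hqdyn hD0
end
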